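/- In a Cartesian tangent category, let A and A' be differential bundles over the final object with associated projections p̂ = {1_{TA}} and p̂' = {1_{TA'}}. A map f: A → A' is a linear bundle morphism if and only if it is differentially linear, i.e. T(f)p̂' = p̂f. -/

import Mathlib

open CategoryTheory CategoryTheory.Limits

universe v u

variable {C : Type u} [Category.{v} C]

/-- Iterated power of an endofunctor. -/
def fpow (T : C ⥤ C) : ℕ → C ⥤ C
  | 0 => 𝟭 C
  | n + 1 => fpow T n ⋙ T

/-- Tangent structure on a category (Cockett–Cruttwell). -/
structure TangentStructure (C : Type u) [Category.{v} C] where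
  T : C ⥤ C
  p : T ⟶ 𝟭 C
  T2 : C ⥤ C
  π0 : T2 ⟶ T
  π1 : T2 ⟶ T
  /-- the chosen object `T2 M` is the pullback of `p` along itself -/
  isPB0 : ∀ M : C, IsPullback (π0.app M) (π1.app M) (p.app M) (p.app M)
  /-- this pullback is preserved by `T` -/
  isPB1 : ∀ M : C, IsPullback (T.map (π0.app M)) (T.map (π1.app M))
      (T.map (p.app M)) (T.map (p.app M))
  /-- and indeed by every power `Tⁿ` -/
  isPBk : ∀ (k : ℕ) (M : C),
    IsPullback ((fpow T k).map (π0.app M)) ((fpow T k).map (π1.app M))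
      ((fpow T k).map (p.app M)) ((fpow T k).map (p.app M))
  /-- all finite wide pullback powers of `p` exist -/
  hasWide : ∀ (n : ℕ) (M : C),
    HasLimit (WidePullbackShape.wideCospan M (fun _ : Fin n => T.obj M) (fun _ => p.app M))
  /-- and are preserved by every power `Tⁿ` -/
  presWide : ∀ (n k : ℕ) (M : C),
    PreservesLimit (WidePullbackShape.wideCospan M (fun _ : Fin n => T.obj M) (fun _ => p.app M))
      (fpow T k)
  add : T2 ⟶ T
  zero : 𝟭 C ⟶ T
  add_p : ∀ M : C, add.app M ≫ p.app M = π0.app M ≫ p.app M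
  zero_p : ∀ M : C, zero.app M ≫ p.app M = 𝟙 M
  add_comm : ∀ {X M : C} (f g : X ⟶ T.obj M) (h : f ≫ p.app M = g ≫ p.app M),
    (isPB0 M).lift f g h ≫ add.app M = (isPB0 M).lift g f h.symm ≫ add.app M
  add_zero : ∀ {X M : C} (f : X ⟶ T.obj M)
    (h : (f ≫ p.app M ≫ zero.app M) ≫ p.app M = f ≫ p.app M),
    (isPB0 M).lift (f ≫ p.app M ≫ zero.app M) f h ≫ add.app M = f
  add_assoc : ∀ {X M : C} (f g h : X ⟶ T.obj M)
    (hfg : f ≫ p.app M = g ≫ p.app M) (hgh : g ≫ p.app M = h ≫ p.app M)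
    (h1 : ((isPB0 M).lift f g hfg ≫ add.app M) ≫ p.app M = h ≫ p.app M)
    (h2 : f ≫ p.app M = ((isPB0 M).lift g h hgh ≫ add.app M) ≫ p.app M),
    (isPB0 M).lift ((isPB0 M).lift f g hfg ≫ add.app M) h h1 ≫ add.app M =
      (isPB0 M).lift f ((isPB0 M).lift g h hgh ≫ add.app M) h2 ≫ add.app M
  l : T ⟶ T ⋙ T
  l_Tp : ∀ M : C, l.app M ≫ T.map (p.app M) = p.app M ≫ zero.app M
  l_zero : ∀ M : C, zero.app M ≫ l.app M = zero.app M ≫ T.map (zero.app M)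
  l_add : ∀ {X M : C} (f g : X ⟶ T.obj M) (h : f ≫ p.app M = g ≫ p.app M)
    (h' : (f ≫ l.app M) ≫ T.map (p.app M) = (g ≫ l.app M) ≫ T.map (p.app M)),
    (isPB0 M).lift f g h ≫ add.app M ≫ l.app M =
      (isPB1 M).lift (f ≫ l.app M) (g ≫ l.app M) h' ≫ T.map (add.app M)
  c : T ⋙ T ⟶ T ⋙ T
  c_p : ∀ M : C, c.app M ≫ p.app (T.obj M) = T.map (p.app M)
  c_zero : ∀ M : C, T.map (zero.app M) ≫ c.app M = zero.app (T.obj M)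
  c_add : ∀ {X M : C} (f g : X ⟶ T.obj (T.obj M))
    (h : f ≫ T.map (p.app M) = g ≫ T.map (p.app M))
    (h' : (f ≫ c.app M) ≫ p.app (T.obj M) = (g ≫ c.app M) ≫ p.app (T.obj M)),
    (isPB1 M).lift f g h ≫ T.map (add.app M) ≫ c.app M =
      (isPB0 (T.obj M)).lift (f ≫ c.app M) (g ≫ c.app M) h' ≫ add.app (T.obj M)
  c_c : ∀ M : C, c.app M ≫ c.app M = 𝟙 _
  l_c : ∀ M : C, l.app M ≫ c.app M = l.app M
  l_l : ∀ M : C, l.app M ≫ T.map (l.app M) = l.app M ≫ l.app (T.obj M)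
  c_coh : ∀ M : C, T.map (c.app M) ≫ c.app (T.obj M) ≫ T.map (c.app M) =
      c.app (T.obj M) ≫ T.map (c.app M) ≫ c.app (T.obj M)
  c_l : ∀ M : C, c.app M ≫ T.map (l.app M) =
      l.app (T.obj M) ≫ T.map (c.app M) ≫ c.app (T.obj M)
  univ : ∀ (k : ℕ) (M : C)
    (h : (π0.app M ≫ l.app M) ≫ T.map (p.app M) =
         (π1.app M ≫ zero.app (T.obj M)) ≫ T.map (p.app M)),
    IsPullback
      ((fpow T k).map ((isPB1 M).lift (π0.app M ≫ l.app M) (π1.app M ≫ zero.app (T.obj M)) h ≫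
        T.map (add.app M)))
      ((fpow T k).map (π0.app M ≫ p.app M))
      ((fpow T k).map (T.map (p.app M)))
      ((fpow T k).map (zero.app M))

namespace TangentStructure

/-- The data of a differential bundle over `M` with total space `E`. -/
structure DiffBundleData (TS : TangentStructure C) (E M : C) where
  q : E ⟶ M
  E2 : C
  p0 : E2 ⟶ E
  p1 : E2 ⟶ E
  σ : E2 ⟶ E
  ζ : M ⟶ E
  lam : E ⟶ TS.T.obj E

variable (TS : TangentStructure C)

/-- The axioms making `D` a differential bundle (without the universality of the lift). -/
structure IsPreDiffBundle {E M : C} (D : TS.DiffBundleData E M) : Prop where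
  isPB0 : IsPullback D.p0 D.p1 D.q D.q
  isPB1 : IsPullback (TS.T.map D.p0) (TS.T.map D.p1) (TS.T.map D.q) (TS.T.map D.q)
  isPBk : ∀ k : ℕ, IsPullback ((fpow TS.T k).map D.p0) ((fpow TS.T k).map D.p1)
      ((fpow TS.T k).map D.q) ((fpow TS.T k).map D.q)
  hasWide : ∀ n : ℕ,
    HasLimit (WidePullbackShape.wideCospan M (fun _ : Fin n => E) (fun _ => D.q))
  presWide : ∀ n k : ℕ,
    PreservesLimit (WidePullbackShape.wideCospan M (fun _ : Fin n => E) (fun _ => D.q))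
      (fpow TS.T k)
  σ_q : D.σ ≫ D.q = D.p0 ≫ D.q
  ζ_q : D.ζ ≫ D.q = 𝟙 M
  σ_comm : ∀ {X : C} (f g : X ⟶ E) (h : f ≫ D.q = g ≫ D.q),
    isPB0.lift f g h ≫ D.σ = isPB0.lift g f h.symm ≫ D.σ
  σ_zero : ∀ {X : C} (f : X ⟶ E) (h : (f ≫ D.q ≫ D.ζ) ≫ D.q = f ≫ D.q),
    isPB0.lift (f ≫ D.q ≫ D.ζ) f h ≫ D.σ = f
  σ_assoc : ∀ {X : C} (f g h : X ⟶ E)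
    (hfg : f ≫ D.q = g ≫ D.q) (hgh : g ≫ D.q = h ≫ D.q)
    (h1 : (isPB0.lift f g hfg ≫ D.σ) ≫ D.q = h ≫ D.q)
    (h2 : f ≫ D.q = (isPB0.lift g h hgh ≫ D.σ) ≫ D.q),
    isPB0.lift (isPB0.lift f g hfg ≫ D.σ) h h1 ≫ D.σ =
      isPB0.lift f (isPB0.lift g h hgh ≫ D.σ) h2 ≫ D.σ
  lam_Tq : D.lam ≫ TS.T.map D.q = D.q ≫ TS.zero.app M
  lam_zero0 : D.ζ ≫ D.lam = TS.zero.app M ≫ TS.T.map D.ζ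
  lam_add0 : ∀ {X : C} (f g : X ⟶ E) (h : f ≫ D.q = g ≫ D.q)
    (h' : (f ≫ D.lam) ≫ TS.T.map D.q = (g ≫ D.lam) ≫ TS.T.map D.q),
    isPB0.lift f g h ≫ D.σ ≫ D.lam =
      isPB1.lift (f ≫ D.lam) (g ≫ D.lam) h' ≫ TS.T.map D.σ
  lam_p : D.lam ≫ TS.p.app E = D.q ≫ D.ζ
  lam_zero1 : D.ζ ≫ D.lam = D.ζ ≫ TS.zero.app E
  lam_add1 : ∀ {X : C} (f g : X ⟶ E) (h : f ≫ D.q = g ≫ D.q)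
    (h' : (f ≫ D.lam) ≫ TS.p.app E = (g ≫ D.lam) ≫ TS.p.app E),
    isPB0.lift f g h ≫ D.σ ≫ D.lam =
      (TS.isPB0 E).lift (f ≫ D.lam) (g ≫ D.lam) h' ≫ TS.add.app E
  lam_l : D.lam ≫ TS.l.app E = D.lam ≫ TS.T.map D.lam

/-- The full axioms for a differential bundle, including the universality of the lift. -/
structure IsDiffBundle {E M : C} (D : TS.DiffBundleData E M)
    extends TS.IsPreDiffBundle D : Prop where
  univ : ∀ (k : ℕ)
    (h : (D.p0 ≫ D.lam) ≫ TS.T.map D.q = (D.p1 ≫ TS.zero.app E) ≫ TS.T.map D.q),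
    IsPullback
      ((fpow TS.T k).map (toIsPreDiffBundle.isPB1.lift (D.p0 ≫ D.lam)
        (D.p1 ≫ TS.zero.app E) h ≫ TS.T.map D.σ))
      ((fpow TS.T k).map (D.p0 ≫ D.q))
      ((fpow TS.T k).map (TS.T.map D.q))
      ((fpow TS.T k).map (TS.zero.app M))

variable {TS}

lemma mu_w {E M : C} {D : TS.DiffBundleData E M} (hD : TS.IsPreDiffBundle D) :
    (D.p0 ≫ D.lam) ≫ TS.T.map D.q = (D.p1 ≫ TS.zero.app E) ≫ TS.T.map D.q := by
  have hz : TS.zero.app E ≫ TS.T.map D.q = D.q ≫ TS.zero.app M := by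
    simpa using (TS.zero.naturality D.q).symm
  rw [Category.assoc, hD.lam_Tq, Category.assoc, hz, ← Category.assoc, ← Category.assoc,
    hD.isPB0.w]

/-- The map `μ = ⟨π₀λ, π₁0⟩T(σ) : E₂ ⟶ TE` of a differential bundle. -/
noncomputable def DiffBundleData.mu {E M : C} (D : TS.DiffBundleData E M)
    (hD : TS.IsPreDiffBundle D) : D.E2 ⟶ TS.T.obj E :=
  hD.isPB1.lift (D.p0 ≫ D.lam) (D.p1 ≫ TS.zero.app E) (mu_w hD) ≫ TS.T.map D.σ

/-- `IsBracket f b` says that `b` satisfies the defining property of the bracket `{f}`: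
`f = ⟨bλ, fp0⟩T(σ)`. -/
def IsBracket {E M : C} (D : TS.DiffBundleData E M)
    (h1 : IsPullback (TS.T.map D.p0) (TS.T.map D.p1) (TS.T.map D.q) (TS.T.map D.q))
    {X : C} (f : X ⟶ TS.T.obj E) (b : X ⟶ E) : Prop :=
  ∃ w, f = h1.lift (b ≫ D.lam) (f ≫ TS.p.app E ≫ TS.zero.app E) w ≫ TS.T.map D.σ

/-- `(f, g)` is a morphism of differential bundles. -/
def IsBundleHom {E M E' M' : C} (D : TS.DiffBundleData E M) (D' : TS.DiffBundleData E' M')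
    (f : E ⟶ E') (g : M ⟶ M') : Prop :=
  f ≫ D'.q = D.q ≫ g

/-- `(f, g)` is a linear morphism of differential bundles. -/
def IsLinearBundleHom {E M E' M' : C} (D : TS.DiffBundleData E M) (D' : TS.DiffBundleData E' M')
    (f : E ⟶ E') (g : M ⟶ M') : Prop :=
  f ≫ D'.q = D.q ≫ g ∧ f ≫ D'.lam = D.lam ≫ TS.T.map f

/-- Applying the tangent functor to a differential bundle. -/
def DiffBundleData.tangent {E M : C} (D : TS.DiffBundleData E M) :
    TS.DiffBundleData (TS.T.obj E) (TS.T.obj M) where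
  q := TS.T.map D.q
  E2 := TS.T.obj D.E2
  p0 := TS.T.map D.p0
  p1 := TS.T.map D.p1
  σ := TS.T.map D.σ
  ζ := TS.T.map D.ζ
  lam := TS.T.map D.lam ≫ TS.c.app E

end TangentStructure

namespace TangentStructure

variable [HasFiniteProducts C]

/-- The data of a differential bundle over the final object on `A`, with `E₂ = A ⨯ A`. -/
noncomputable def termData (TS : TangentStructure C) {A : C} (σ : A ⨯ A ⟶ A) (ζ : ⊤_ C ⟶ A)
    (lam : A ⟶ TS.T.obj A) : TS.DiffBundleData A (⊤_ C) where
  q := terminal.from A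
  E2 := A ⨯ A
  p0 := prod.fst
  p1 := prod.snd
  σ := σ
  ζ := ζ
  lam := lam

/-- A differential object in a Cartesian tangent category: a commutative monoid
`(A, σ, ζ)` together with a projection `p̂ : TA ⟶ A` such that `(p̂, p)` is a product
diagram, `(p̂, !)` and `(!, p̂)` are additive bundle morphisms, and `ℓ·T(p̂)·p̂ = p̂`. -/
structure DiffObj (TS : TangentStructure C) (A : C) where
  σ : A ⨯ A ⟶ A
  ζ : ⊤_ C ⟶ A
  phat : TS.T.obj A ⟶ A
  mon_comm : (prod.braiding A A).hom ≫ σ = σ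
  mon_assoc : prod.map σ (𝟙 A) ≫ σ = (prod.associator A A A).hom ≫ prod.map (𝟙 A) σ ≫ σ
  mon_unit : prod.lift (terminal.from A ≫ ζ) (𝟙 A) ≫ σ = 𝟙 A
  prod_diag : ∀ {X : C} (a b : X ⟶ A),
    ∃! u : X ⟶ TS.T.obj A, u ≫ phat = a ∧ u ≫ TS.p.app A = b
  phat_Tσ : TS.T.map σ ≫ phat =
    prod.lift (TS.T.map prod.fst ≫ phat) (TS.T.map prod.snd ≫ phat) ≫ σ
  phat_Tζ : TS.T.map ζ ≫ phat = terminal.from _ ≫ ζ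
  phat_add : TS.add.app A ≫ phat =
    prod.lift (TS.π0.app A ≫ phat) (TS.π1.app A ≫ phat) ≫ σ
  phat_zero : TS.zero.app A ≫ phat = terminal.from A ≫ ζ
  phat_l : TS.l.app A ≫ TS.T.map phat ≫ phat = phat

/-- The "exchange" map swapping the two middle factors of a fourfold product. -/
noncomputable def exch (A B A' B' : C) : (A ⨯ B) ⨯ (A' ⨯ B') ⟶ (A ⨯ A') ⨯ (B ⨯ B') :=
  prod.lift (prod.map prod.fst prod.fst) (prod.map prod.snd prod.snd)

variable (TS : TangentStructure C) [PreservesFiniteProducts TS.T]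

/-- Coherent differential structure: a canonical differential bundle over the final
object on every object, compatible with products ([CDS.1]) and with `T` ([CDS.2]). -/
structure CoherentDiff where
  σ : ∀ A : C, A ⨯ A ⟶ A
  ζ : ∀ A : C, ⊤_ C ⟶ A
  lam : ∀ A : C, A ⟶ TS.T.obj A
  isBun : ∀ A : C, TS.IsDiffBundle (termData TS (σ A) (ζ A) (lam A))
  cds1_ζ : ∀ A B : C, ζ (A ⨯ B) = prod.lift (ζ A) (ζ B)
  cds1_σ : ∀ A B : C, σ (A ⨯ B) = exch A B A B ≫ prod.map (σ A) (σ B)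
  cds1_lam : ∀ A B : C, lam (A ⨯ B) =
    prod.map (lam A) (lam B) ≫ (PreservesLimitPair.iso TS.T A B).inv
  cds2_ζ : ∀ A : C, ζ (TS.T.obj A) = (PreservesTerminal.iso TS.T).inv ≫ TS.T.map (ζ A)
  cds2_σ : ∀ A : C, σ (TS.T.obj A) = (PreservesLimitPair.iso TS.T A A).inv ≫ TS.T.map (σ A)
  cds2_lam : ∀ A : C, lam (TS.T.obj A) = TS.T.map (lam A) ≫ TS.c.app A

variable {TS}

lemma phat_w {A : C} {σ : A ⨯ A ⟶ A} {ζ : ⊤_ C ⟶ A} {lam : A ⟶ TS.T.obj A} :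
    𝟙 (TS.T.obj A) ≫ (fpow TS.T 0).map (TS.T.map (termData TS σ ζ lam).q) =
      (TS.p.app A ≫ (termData TS σ ζ lam).q) ≫ (fpow TS.T 0).map (TS.zero.app (⊤_ C)) := by
  exact (terminalIsTerminal.isTerminalObj TS.T (⊤_ C)).hom_ext _ _

/-- The projection `p̂ = {1_{TA}} : TA ⟶ A` of a differential bundle over the final
object, obtained from the universality of the lift. -/
noncomputable def bPhat {A : C} {σ : A ⨯ A ⟶ A} {ζ : ⊤_ C ⟶ A} {lam : A ⟶ TS.T.obj A}
    (hD : TS.IsDiffBundle (termData TS σ ζ lam)) : TS.T.obj A ⟶ A :=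
  (hD.univ 0 (mu_w hD.toIsPreDiffBundle)).lift (𝟙 (TS.T.obj A))
    (TS.p.app A ≫ (termData TS σ ζ lam).q) phat_w ≫ prod.fst

namespace CoherentDiff

variable (cd : CoherentDiff TS)

/-- The canonical projection `p̂_A` determined by a coherent differential structure. -/
noncomputable def phat (A : C) : TS.T.obj A ⟶ A := bPhat (cd.isBun A)

/-- The canonical map `μ_A = ⟨π₀λ_A, π₁0⟩T(σ_A) : A ⨯ A ⟶ TA`. -/
noncomputable def mu (A : C) : A ⨯ A ⟶ TS.T.obj A :=
  (termData TS (cd.σ A) (cd.ζ A) (cd.lam A)).mu (cd.isBun A).toIsPreDiffBundle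

/-- The differential combinator `D[f] := μ_A · T(f) · p̂_B`. -/
noncomputable def diff {A B : C} (f : A ⟶ B) : A ⨯ A ⟶ B :=
  cd.mu A ≫ TS.T.map f ≫ cd.phat B

/-- Addition of parallel maps determined by the canonical monoid structures. -/
noncomputable def homAdd {X A : C} (f g : X ⟶ A) : X ⟶ A := prod.lift f g ≫ cd.σ A

/-- The zero map determined by the canonical monoid structures. -/
noncomputable def homZero (X A : C) : X ⟶ A := terminal.from X ≫ cd.ζ A

end CoherentDiff

end TangentStructure

/-!
The universality of the vertical lift makes `μ = ⟨π₀λ, π₁0⟩T(σ) : A × A → TA` monic, and the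
defining property of `p̂` says `⟨p̂, p⟩μ = 1`; so `μ` is an isomorphism with inverse `⟨p̂, p⟩`.
Since `λ = ⟨1, 0⟩μ` and `0 = ⟨0, 1⟩μ`, this gives `λp̂ = 1` and `0p̂ = 0`.

If `f` is linear, cancelling `λ'` (using `λ'p̂' = 1`) from the additivity of `λ` shows that `f` is
additive, hence `μT(f) = (f × f)μ'` and `T(f)p̂' = ⟨p̂, p⟩μT(f)p̂' = ⟨p̂, p⟩(f × f)π₀ = p̂f`.
Conversely, maps into `TA'` are determined by their composites with `p̂'` and `p`; for both `fλ'`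
and `λT(f)` these are `f` and the zero map, the latter because `ζf = ζ'` follows from `0p̂ = 0`.
-/

namespace TangentStructure

variable {TS : TangentStructure C}

lemma comp_zero_app {Y Z : C} (g : Y ⟶ Z) : g ≫ TS.zero.app Z = TS.zero.app Y ≫ TS.T.map g :=
  TS.zero.naturality g

lemma map_comp_p_app {Y Z : C} (g : Y ⟶ Z) : TS.T.map g ≫ TS.p.app Z = TS.p.app Y ≫ g :=
  TS.p.naturality g

variable [HasFiniteProducts C] {A : C} {σ : A ⨯ A ⟶ A} {ζ : ⊤_ C ⟶ A} {lam : A ⟶ TS.T.obj A}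

namespace IsPreDiffBundle

lemma isPB0_lift_eq_prod_lift (hD : TS.IsPreDiffBundle (termData TS σ ζ lam)) {X : C}
    (a b : X ⟶ A) (w : a ≫ (termData TS σ ζ lam).q = b ≫ (termData TS σ ζ lam).q) :
    hD.isPB0.lift a b w = prod.lift a b :=
  prod.hom_ext ((hD.isPB0.lift_fst a b w).trans (prod.lift_fst a b).symm)
    ((hD.isPB0.lift_snd a b w).trans (prod.lift_snd a b).symm)

lemma prod_lift_comp_σ_comm (hD : TS.IsPreDiffBundle (termData TS σ ζ lam)) {X : C}
    (a b : X ⟶ A) : prod.lift a b ≫ σ = prod.lift b a ≫ σ := by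
  have h := hD.σ_comm a b (terminal.hom_ext _ _)
  rw [hD.isPB0_lift_eq_prod_lift, hD.isPB0_lift_eq_prod_lift] at h
  exact h

lemma prod_lift_zero_id_comp_σ (hD : TS.IsPreDiffBundle (termData TS σ ζ lam)) :
    prod.lift (terminal.from A ≫ ζ) (𝟙 A) ≫ σ = 𝟙 A := by
  have h := hD.σ_zero (𝟙 A) (terminal.hom_ext _ _)
  rw [hD.isPB0_lift_eq_prod_lift, Category.id_comp] at h
  exact h

lemma prod_lift_id_zero_comp_σ (hD : TS.IsPreDiffBundle (termData TS σ ζ lam)) :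
    prod.lift (𝟙 A) (terminal.from A ≫ ζ) ≫ σ = 𝟙 A := by
  rw [hD.prod_lift_comp_σ_comm, hD.prod_lift_zero_id_comp_σ]

lemma lam_comp_p (hD : TS.IsPreDiffBundle (termData TS σ ζ lam)) :
    lam ≫ TS.p.app A = terminal.from A ≫ ζ :=
  hD.lam_p

lemma comp_lam_comp_p_eq (hD : TS.IsPreDiffBundle (termData TS σ ζ lam)) {X : C}
    (a b : X ⟶ A) : (a ≫ lam) ≫ TS.p.app A = (b ≫ lam) ≫ TS.p.app A := by
  rw [Category.assoc, Category.assoc, hD.lam_comp_p, ← Category.assoc, ← Category.assoc,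
    terminal.hom_ext (a ≫ _) (b ≫ _)]

lemma σ_comp_lam (hD : TS.IsPreDiffBundle (termData TS σ ζ lam)) :
    σ ≫ lam = (TS.isPB0 A).lift (prod.fst ≫ lam) (prod.snd ≫ lam)
      (hD.comp_lam_comp_p_eq _ _) ≫ TS.add.app A := by
  have h := hD.lam_add1 prod.fst prod.snd (terminal.hom_ext _ _) (hD.comp_lam_comp_p_eq _ _)
  rw [hD.isPB0_lift_eq_prod_lift, prod.lift_fst_snd] at h
  exact (Category.id_comp _).symm.trans h

/- `isPB1` and `DiffBundleData.mu` restated with `A ⨯ A` in place of `(termData TS σ ζ lam).E2`,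
so that they compose with `prod.lift` syntactically. -/
lemma isPullback_map_fst_map_snd (hD : TS.IsPreDiffBundle (termData TS σ ζ lam)) :
    IsPullback (TS.T.map (prod.fst : A ⨯ A ⟶ A)) (TS.T.map prod.snd)
      (TS.T.map (terminal.from A)) (TS.T.map (terminal.from A)) :=
  hD.isPB1

lemma comp_lam_map_q_eq (hD : TS.IsPreDiffBundle (termData TS σ ζ lam)) {X : C}
    (a b : X ⟶ A) :
    (a ≫ lam) ≫ TS.T.map (terminal.from A) =
      (b ≫ TS.zero.app A) ≫ TS.T.map (terminal.from A) := by
  have hlam : lam ≫ TS.T.map (terminal.from A) = terminal.from A ≫ TS.zero.app (⊤_ C) :=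
    hD.lam_Tq
  rw [Category.assoc, Category.assoc, hlam, ← comp_zero_app, ← Category.assoc,
    ← Category.assoc, terminal.hom_ext (a ≫ _) (b ≫ _)]

noncomputable def mu (hD : TS.IsPreDiffBundle (termData TS σ ζ lam)) : A ⨯ A ⟶ TS.T.obj A :=
  (termData TS σ ζ lam).mu hD

lemma mu_eq (hD : TS.IsPreDiffBundle (termData TS σ ζ lam)) :
    hD.mu = hD.isPullback_map_fst_map_snd.lift (prod.fst ≫ lam)
      ((prod.snd : A ⨯ A ⟶ A) ≫ TS.zero.app A) (hD.comp_lam_map_q_eq _ _) ≫ TS.T.map σ :=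
  rfl

lemma prod_lift_comp_mu (hD : TS.IsPreDiffBundle (termData TS σ ζ lam)) {X : C}
    (a b : X ⟶ A) :
    prod.lift a b ≫ hD.mu =
      hD.isPullback_map_fst_map_snd.lift (a ≫ lam) (b ≫ TS.zero.app A)
        (hD.comp_lam_map_q_eq a b) ≫ TS.T.map σ := by
  rw [mu_eq, ← Category.assoc]
  congr 1
  apply hD.isPullback_map_fst_map_snd.hom_ext
  · rw [Category.assoc, IsPullback.lift_fst, IsPullback.lift_fst, prod.lift_fst_assoc]
  · rw [Category.assoc, IsPullback.lift_snd, IsPullback.lift_snd, prod.lift_snd_assoc]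

lemma lift_eq_comp_map_prod_lift (hD : TS.IsPreDiffBundle (termData TS σ ζ lam)) {X Y : C}
    {x : X ⟶ TS.T.obj Y} {a b : Y ⟶ A} {u v : X ⟶ TS.T.obj A} (ha : x ≫ TS.T.map a = u)
    (hb : x ≫ TS.T.map b = v) (w) :
    hD.isPullback_map_fst_map_snd.lift u v w = x ≫ TS.T.map (prod.lift a b) := by
  subst ha hb
  apply hD.isPullback_map_fst_map_snd.hom_ext <;>
    simp only [IsPullback.lift_fst, IsPullback.lift_snd, Category.assoc, ← Functor.map_comp,
      prod.lift_fst, prod.lift_snd]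

lemma prod_lift_id_zero_comp_mu (hD : TS.IsPreDiffBundle (termData TS σ ζ lam)) :
    prod.lift (𝟙 A) (terminal.from A ≫ ζ) ≫ hD.mu = lam := by
  have hζ : lam ≫ TS.T.map (terminal.from A ≫ ζ) = (terminal.from A ≫ ζ) ≫ TS.zero.app A := by
    have hlam : lam ≫ TS.T.map (terminal.from A) = terminal.from A ≫ TS.zero.app (⊤_ C) :=
      hD.lam_Tq
    rw [Functor.map_comp, reassoc_of% hlam, Category.assoc, ← comp_zero_app]
  rw [hD.prod_lift_comp_mu, hD.lift_eq_comp_map_prod_lift (a := 𝟙 A) (by simp) hζ,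
    Category.assoc, ← Functor.map_comp, hD.prod_lift_id_zero_comp_σ,
    CategoryTheory.Functor.map_id, Category.comp_id]

lemma prod_lift_zero_id_comp_mu (hD : TS.IsPreDiffBundle (termData TS σ ζ lam)) :
    prod.lift (terminal.from A ≫ ζ) (𝟙 A) ≫ hD.mu = TS.zero.app A := by
  have hζ : TS.zero.app A ≫ TS.T.map (terminal.from A ≫ ζ) = (terminal.from A ≫ ζ) ≫ lam := by
    have hlam : ζ ≫ lam = ζ ≫ TS.zero.app A := hD.lam_zero1
    rw [Category.assoc, hlam, ← Category.assoc, comp_zero_app]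
  rw [hD.prod_lift_comp_mu, hD.lift_eq_comp_map_prod_lift hζ (b := 𝟙 A) (by simp),
    Category.assoc, ← Functor.map_comp, hD.prod_lift_zero_id_comp_σ,
    CategoryTheory.Functor.map_id, Category.comp_id]

end IsPreDiffBundle

variable {phat : TS.T.obj A ⟶ A}

namespace IsBracket

lemma prod_lift_comp_mu (hD : TS.IsPreDiffBundle (termData TS σ ζ lam))
    (hphat : IsBracket (termData TS σ ζ lam) hD.isPB1 (𝟙 (TS.T.obj A)) phat) :
    -- without the ascription the product would be `A ⨯ (𝟭 C).obj A`
    (prod.lift phat (TS.p.app A) : TS.T.obj A ⟶ A ⨯ A) ≫ hD.mu = 𝟙 (TS.T.obj A) := by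
  obtain ⟨w, hw⟩ := hphat
  simp only [Category.id_comp] at hw
  rw [hD.prod_lift_comp_mu]
  exact hw.symm

lemma hom_ext (hD : TS.IsPreDiffBundle (termData TS σ ζ lam))
    (hphat : IsBracket (termData TS σ ζ lam) hD.isPB1 (𝟙 (TS.T.obj A)) phat) {X : C}
    {u v : X ⟶ TS.T.obj A} (h₁ : u ≫ phat = v ≫ phat) (h₂ : u ≫ TS.p.app A = v ≫ TS.p.app A) :
    u = v := by
  rw [← Category.comp_id u, ← Category.comp_id v, ← hphat.prod_lift_comp_mu hD,
    prod.comp_lift_assoc, prod.comp_lift_assoc, h₁, h₂]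

end IsBracket

namespace IsDiffBundle

lemma mono_mu (hD : TS.IsDiffBundle (termData TS σ ζ lam)) : Mono hD.mu :=
  ⟨fun _ _ h => (hD.univ 0 (mu_w hD.toIsPreDiffBundle)).hom_ext h (terminal.hom_ext _ _)⟩

noncomputable def muIso (hD : TS.IsDiffBundle (termData TS σ ζ lam))
    (hphat : IsBracket (termData TS σ ζ lam) hD.isPB1 (𝟙 (TS.T.obj A)) phat) :
    A ⨯ A ≅ TS.T.obj A where
  hom := hD.mu
  inv := prod.lift phat (TS.p.app A)
  hom_inv_id := by
    have := hD.mono_mu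
    rw [← cancel_mono hD.mu, Category.assoc, hphat.prod_lift_comp_mu hD.toIsPreDiffBundle,
      Category.comp_id, Category.id_comp]
  inv_hom_id := hphat.prod_lift_comp_mu hD.toIsPreDiffBundle

lemma mu_comp_phat (hD : TS.IsDiffBundle (termData TS σ ζ lam))
    (hphat : IsBracket (termData TS σ ζ lam) hD.isPB1 (𝟙 (TS.T.obj A)) phat) :
    hD.mu ≫ phat = prod.fst := by
  simpa only [muIso, prod.lift_fst] using (hD.muIso hphat).hom_inv_id_assoc prod.fst

lemma lam_comp_phat (hD : TS.IsDiffBundle (termData TS σ ζ lam))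
    (hphat : IsBracket (termData TS σ ζ lam) hD.isPB1 (𝟙 (TS.T.obj A)) phat) :
    lam ≫ phat = 𝟙 A :=
  calc lam ≫ phat = (prod.lift (𝟙 A) (terminal.from A ≫ ζ) ≫ hD.mu) ≫ phat := by
        rw [hD.prod_lift_id_zero_comp_mu]
    _ = 𝟙 A := by rw [Category.assoc, hD.mu_comp_phat hphat, prod.lift_fst]

lemma zero_comp_phat (hD : TS.IsDiffBundle (termData TS σ ζ lam))
    (hphat : IsBracket (termData TS σ ζ lam) hD.isPB1 (𝟙 (TS.T.obj A)) phat) :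
    TS.zero.app A ≫ phat = terminal.from A ≫ ζ :=
  calc TS.zero.app A ≫ phat = (prod.lift (terminal.from A ≫ ζ) (𝟙 A) ≫ hD.mu) ≫ phat := by
        rw [hD.prod_lift_zero_id_comp_mu]
    _ = terminal.from A ≫ ζ := by rw [Category.assoc, hD.mu_comp_phat hphat, prod.lift_fst]

end IsDiffBundle

variable {A' : C} {σ' : A' ⨯ A' ⟶ A'} {ζ' : ⊤_ C ⟶ A'} {lam' : A' ⟶ TS.T.obj A'}
  {phat' : TS.T.obj A' ⟶ A'} {f : A ⟶ A'}

lemma σ_comp_lam_comp_map_of_linear (hD : TS.IsPreDiffBundle (termData TS σ ζ lam))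
    (hD' : TS.IsPreDiffBundle (termData TS σ' ζ' lam')) (hf : f ≫ lam' = lam ≫ TS.T.map f) :
    σ ≫ lam ≫ TS.T.map f = prod.map f f ≫ σ' ≫ lam' := by
  rw [← Category.assoc, hD.σ_comp_lam, hD'.σ_comp_lam, Category.assoc, ← TS.add.naturality,
    ← Category.assoc, ← Category.assoc]
  congr 1
  apply (TS.isPB0 A').hom_ext <;> simp [hf]

lemma σ_comp_of_linear (hD : TS.IsPreDiffBundle (termData TS σ ζ lam))
    (hD' : TS.IsDiffBundle (termData TS σ' ζ' lam'))
    (hphat' : IsBracket (termData TS σ' ζ' lam') hD'.isPB1 (𝟙 (TS.T.obj A')) phat')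
    (hf : f ≫ lam' = lam ≫ TS.T.map f) :
    σ ≫ f = prod.map f f ≫ σ' :=
  calc σ ≫ f = σ ≫ f ≫ lam' ≫ phat' := by rw [hD'.lam_comp_phat hphat', Category.comp_id]
    _ = (σ ≫ lam ≫ TS.T.map f) ≫ phat' := by rw [reassoc_of% hf]; simp only [Category.assoc]
    _ = prod.map f f ≫ σ' := by
      rw [σ_comp_lam_comp_map_of_linear hD hD'.toIsPreDiffBundle hf]
      simp only [Category.assoc, hD'.lam_comp_phat hphat', Category.comp_id]

lemma mu_comp_map_of_linear (hD : TS.IsPreDiffBundle (termData TS σ ζ lam))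
    (hD' : TS.IsPreDiffBundle (termData TS σ' ζ' lam')) (hσ : σ ≫ f = prod.map f f ≫ σ')
    (hf : f ≫ lam' = lam ≫ TS.T.map f) :
    hD.mu ≫ TS.T.map f = prod.map f f ≫ hD'.mu := by
  set L := hD.isPullback_map_fst_map_snd.lift (prod.fst ≫ lam)
    ((prod.snd : A ⨯ A ⟶ A) ≫ TS.zero.app A) (hD.comp_lam_map_q_eq _ _)
  have h₁ : L ≫ TS.T.map (prod.fst ≫ f) = (prod.fst ≫ f) ≫ lam' := by
    rw [Functor.map_comp, IsPullback.lift_fst_assoc, Category.assoc, Category.assoc, hf]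
  have h₂ : L ≫ TS.T.map (prod.snd ≫ f) = (prod.snd ≫ f) ≫ TS.zero.app A' := by
    rw [Functor.map_comp, IsPullback.lift_snd_assoc, Category.assoc, Category.assoc,
      comp_zero_app]
  calc hD.mu ≫ TS.T.map f = L ≫ TS.T.map (prod.lift (prod.fst ≫ f) (prod.snd ≫ f) ≫ σ') := by
        rw [hD.mu_eq, prod.lift_fst_comp_snd_comp, ← hσ, Functor.map_comp, Category.assoc]
    _ = prod.map f f ≫ hD'.mu := by
        rw [← prod.lift_fst_comp_snd_comp, hD'.prod_lift_comp_mu,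
          hD'.lift_eq_comp_map_prod_lift h₁ h₂, Functor.map_comp, Category.assoc]

lemma map_comp_phat_of_linear (hD : TS.IsPreDiffBundle (termData TS σ ζ lam))
    (hD' : TS.IsDiffBundle (termData TS σ' ζ' lam'))
    (hphat : IsBracket (termData TS σ ζ lam) hD.isPB1 (𝟙 (TS.T.obj A)) phat)
    (hphat' : IsBracket (termData TS σ' ζ' lam') hD'.isPB1 (𝟙 (TS.T.obj A')) phat')
    (hf : f ≫ lam' = lam ≫ TS.T.map f) :
    TS.T.map f ≫ phat' = phat ≫ f := by
  have hμ := mu_comp_map_of_linear hD hD'.toIsPreDiffBundle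
    (σ_comp_of_linear hD hD' hphat' hf) hf
  calc TS.T.map f ≫ phat'
      = (prod.lift phat (TS.p.app A) : TS.T.obj A ⟶ A ⨯ A) ≫ hD.mu ≫ TS.T.map f ≫ phat' := by
        rw [reassoc_of% (hphat.prod_lift_comp_mu hD)]
    _ = phat ≫ f := by
        rw [reassoc_of% hμ, hD'.mu_comp_phat hphat', prod.map_fst, prod.lift_fst_assoc]

lemma ζ_comp_of_map_comp_phat (hD : TS.IsDiffBundle (termData TS σ ζ lam))
    (hD' : TS.IsDiffBundle (termData TS σ' ζ' lam'))
    (hphat : IsBracket (termData TS σ ζ lam) hD.isPB1 (𝟙 (TS.T.obj A)) phat)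
    (hphat' : IsBracket (termData TS σ' ζ' lam') hD'.isPB1 (𝟙 (TS.T.obj A')) phat')
    (hf : TS.T.map f ≫ phat' = phat ≫ f) :
    ζ ≫ f = ζ' :=
  calc ζ ≫ f = ζ ≫ TS.zero.app A ≫ TS.T.map f ≫ phat' := by
        rw [hf, reassoc_of% (hD.zero_comp_phat hphat), ← Category.assoc ζ,
          terminal.hom_ext (ζ ≫ _) (𝟙 _), Category.id_comp]
    _ = ζ' := by
        rw [← reassoc_of% (comp_zero_app f), hD'.zero_comp_phat hphat', ← Category.assoc,
          ← Category.assoc, terminal.hom_ext (_ ≫ _) (𝟙 _), Category.id_comp]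

lemma comp_lam_of_map_comp_phat (hD : TS.IsDiffBundle (termData TS σ ζ lam))
    (hD' : TS.IsDiffBundle (termData TS σ' ζ' lam'))
    (hphat : IsBracket (termData TS σ ζ lam) hD.isPB1 (𝟙 (TS.T.obj A)) phat)
    (hphat' : IsBracket (termData TS σ' ζ' lam') hD'.isPB1 (𝟙 (TS.T.obj A')) phat')
    (hf : TS.T.map f ≫ phat' = phat ≫ f) :
    f ≫ lam' = lam ≫ TS.T.map f := by
  apply hphat'.hom_ext hD'.toIsPreDiffBundle
  · rw [Category.assoc, hD'.lam_comp_phat hphat', Category.comp_id, Category.assoc, hf,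
      reassoc_of% (hD.lam_comp_phat hphat)]
  · rw [Category.assoc, hD'.lam_comp_p, Category.assoc, map_comp_p_app,
      reassoc_of% hD.lam_comp_p, ζ_comp_of_map_comp_phat hD hD' hphat hphat' hf,
      ← Category.assoc, terminal.hom_ext (f ≫ _) (terminal.from A)]

end TangentStructure

open TangentStructure in
theorem linear_iff_diff_linear_general (TS : TangentStructure C) [HasFiniteProducts C]
    {A A' : C}
    (σ : A ⨯ A ⟶ A) (ζ : ⊤_ C ⟶ A) (lam : A ⟶ TS.T.obj A)
    (σ' : A' ⨯ A' ⟶ A') (ζ' : ⊤_ C ⟶ A') (lam' : A' ⟶ TS.T.obj A')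
    (hD : TS.IsDiffBundle (termData TS σ ζ lam))
    (hD' : TS.IsDiffBundle (termData TS σ' ζ' lam'))
    (phat : TS.T.obj A ⟶ A) (phat' : TS.T.obj A' ⟶ A')
    (hphat : IsBracket (termData TS σ ζ lam) hD.isPB1 (𝟙 (TS.T.obj A)) phat)
    (hphat' : IsBracket (termData TS σ' ζ' lam') hD'.isPB1 (𝟙 (TS.T.obj A')) phat')
    (f : A ⟶ A') :
    IsLinearBundleHom (termData TS σ ζ lam) (termData TS σ' ζ' lam') f (𝟙 (⊤_ C)) ↔
      TS.T.map f ≫ phat' = phat ≫ f :=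
  ⟨fun hf => map_comp_phat_of_linear hD.toIsPreDiffBundle hD' hphat hphat' hf.2,
    fun hf => ⟨terminal.hom_ext _ _, comp_lam_of_map_comp_phat hD hD' hphat hphat' hf⟩⟩

open TangentStructure in
/-- in a Cartesian tangent category, a map `f : A ⟶ A'` between
differential bundles over the final object is a linear bundle morphism if and only if it
is differentially linear, i.e. `T(f)p̂' = p̂f`. -/
theorem linear_iff_diff_linear (TS : TangentStructure C) [HasFiniteProducts C]
    [PreservesFiniteProducts TS.T] {A A' : C}
    (σ : A ⨯ A ⟶ A) (ζ : ⊤_ C ⟶ A) (lam : A ⟶ TS.T.obj A)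
    (σ' : A' ⨯ A' ⟶ A') (ζ' : ⊤_ C ⟶ A') (lam' : A' ⟶ TS.T.obj A')
    (hD : TS.IsDiffBundle (termData TS σ ζ lam))
    (hD' : TS.IsDiffBundle (termData TS σ' ζ' lam'))
    (phat : TS.T.obj A ⟶ A) (phat' : TS.T.obj A' ⟶ A')
    (hphat : IsBracket (termData TS σ ζ lam) hD.isPB1 (𝟙 (TS.T.obj A)) phat)
    (hphat' : IsBracket (termData TS σ' ζ' lam') hD'.isPB1 (𝟙 (TS.T.obj A')) phat')
    (f : A ⟶ A') :
    IsLinearBundleHom (termData TS σ ζ lam) (termData TS σ' ζ' lam') f (𝟙 (⊤_ C)) ↔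
      TS.T.map f ≫ phat' = phat ≫ f :=
  linear_iff_diff_linear_general TS σ ζ lam σ' ζ' lam' hD hD' phat phat' hphat hphat' f
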